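/- arXiv:1310.5456 — 3 statements merged into one kernel-verified Lean document; each statement's English description precedes it below -/
import Mathlib

section
/- For any positive integer k, every bipartite graph admits a weakly k-uniform integer additive set-indexer. -/
open Pointwise

/-- The induced edge labeling: the sumset of the labels of the endpoints. -/
def edgeSum {V : Type*} (f : V → Finset ℕ) : Sym2 V → Finset ℕ :=
  Sym2.lift ⟨fun u v => f u + f v, fun u v => by simp [add_comm]⟩

/-- An integer additive set-indexer: an injective labeling of the vertices by
finite nonempty sets of naturals whose induced edge labeling is injective on edges. -/
def IsIASI {V : Type*} (G : SimpleGraph V) (f : V → Finset ℕ) : Prop :=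
  Function.Injective f ∧ (∀ v, (f v).Nonempty) ∧
    ∀ e₁ ∈ G.edgeSet, ∀ e₂ ∈ G.edgeSet, edgeSum f e₁ = edgeSum f e₂ → e₁ = e₂

/-- A `k`-uniform IASI: every edge has set-indexing number `k`. -/
def IsUniformIASI {V : Type*} (G : SimpleGraph V) (f : V → Finset ℕ) (k : ℕ) : Prop :=
  IsIASI G f ∧ ∀ u v, G.Adj u v → (f u + f v).card = k

/-- A weakly `k`-uniform IASI: a `k`-uniform IASI assigning only singleton sets
and `k`-element sets to the vertices. -/
def IsWeaklyUniformIASI {V : Type*} (G : SimpleGraph V) (f : V → Finset ℕ) (k : ℕ) : Prop :=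
  IsUniformIASI G f k ∧ ∀ v, (f v).card = 1 ∨ (f v).card = k

/-!
Properly 2-colour the graph. Give each vertex `a` of colour 0 a singleton `{x a}` and each vertex `b`
of colour 1 an interval `[y b, y b + k)`. Every edge joins one vertex of each colour, so its label is
the interval `[x a + y b, x a + y b + k)` of `k` elements; the edge labels are therefore injective as
soon as `(a, b) ↦ x a + y b` is. For a finite vertex set this holds with `x a = ι a` and
`y b = n (ι b + 1)`, where `ι : V ≃ Fin n` numbers the vertices: `x a + y b` is then a base-`n`
numeral whose digits are `ι a` and `ι b + 1`.
-/

open Finset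

lemma Nat.singleton_add_Ico (a b c : ℕ) : ({a} : Finset ℕ) + Ico b c = Ico (a + b) (a + c) := by
  rw [singleton_add, ← image_vadd, ← image_add_left_Ico]
  rfl

lemma Nat.Ico_add_right_injective {k : ℕ} (hk : 0 < k) :
    Function.Injective fun p : ℕ => Ico p (p + k) := by
  intro p q h
  have h' : Set.Ico p (p + k) = Set.Ico q (q + k) := by
    simpa only [coe_Ico] using congrArg (fun s : Finset ℕ => (s : Set ℕ)) h
  exact ((Set.Ico_eq_Ico_iff (Or.inl (by omega))).1 h').1

lemma Nat.eq_and_eq_of_add_mul_eq {n a₁ a₂ b₁ b₂ : ℕ} (h₁ : a₁ < n) (h₂ : a₂ < n)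
    (h : a₁ + n * b₁ = a₂ + n * b₂) : a₁ = a₂ ∧ b₁ = b₂ := by
  have hn : 0 < n := by omega
  obtain ⟨hb₁, ha₁⟩ := (Nat.div_mod_unique hn).2 ⟨h, h₁⟩
  obtain ⟨hb₂, ha₂⟩ := (Nat.div_mod_unique hn).2 ⟨rfl, h₂⟩
  exact ⟨ha₁.symm.trans ha₂, hb₁.symm.trans hb₂⟩

lemma SimpleGraph.Coloring.exists_eq_mk_of_mem_edgeSet {V : Type*} {G : SimpleGraph V}
    (c : G.Coloring (Fin 2)) {e : Sym2 V} (he : e ∈ G.edgeSet) :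
    ∃ a b, c a = 0 ∧ c b = 1 ∧ e = s(a, b) := by
  induction e using Sym2.ind with | _ u v => ?_
  have hne : c u ≠ c v := c.valid he
  by_cases hu : c u = 0
  · exact ⟨u, v, hu, Fin.eq_one_of_ne_zero _ (hu ▸ hne.symm), rfl⟩
  · refine ⟨v, u, ?_, Fin.eq_one_of_ne_zero _ hu, Sym2.eq_swap⟩
    by_contra hv
    exact hne ((Fin.eq_one_of_ne_zero _ hu).trans (Fin.eq_one_of_ne_zero _ hv).symm)

section bipartiteLabel

variable {V : Type*} (c : V → Fin 2) (x y : V → ℕ) (k : ℕ)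

def bipartiteLabel (v : V) : Finset ℕ :=
  if c v = 0 then {x v} else Ico (y v) (y v + k)

variable {c x y k}

lemma bipartiteLabel_of_eq_zero {v : V} (hv : c v = 0) : bipartiteLabel c x y k v = {x v} :=
  if_pos hv

lemma bipartiteLabel_of_ne_zero {v : V} (hv : c v ≠ 0) :
    bipartiteLabel c x y k v = Ico (y v) (y v + k) :=
  if_neg hv

lemma card_bipartiteLabel (v : V) :
    (bipartiteLabel c x y k v).card = 1 ∨ (bipartiteLabel c x y k v).card = k := by
  by_cases hv : c v = 0
  · simp [bipartiteLabel_of_eq_zero hv]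
  · simp [bipartiteLabel_of_ne_zero hv]

lemma bipartiteLabel_nonempty (hk : 0 < k) (v : V) : (bipartiteLabel c x y k v).Nonempty := by
  by_cases hv : c v = 0
  · simp [bipartiteLabel_of_eq_zero hv]
  · simp [bipartiteLabel_of_ne_zero hv, hk]

lemma bipartiteLabel_add_bipartiteLabel {a b : V} (ha : c a = 0) (hb : c b = 1) :
    bipartiteLabel c x y k a + bipartiteLabel c x y k b = Ico (x a + y b) (x a + y b + k) := by
  rw [bipartiteLabel_of_eq_zero ha, bipartiteLabel_of_ne_zero (hb ▸ one_ne_zero),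
    Nat.singleton_add_Ico, add_assoc]

lemma bipartiteLabel_injective (hk : 0 < k) (hxy : ∀ a b, x a ≠ y b)
    (hsum : Function.Injective fun p : V × V => x p.1 + y p.2) :
    Function.Injective (bipartiteLabel c x y k) := by
  have hx : Function.Injective x := fun a₁ a₂ h =>
    congrArg Prod.fst (@hsum (a₁, a₁) (a₂, a₁) (congrArg (· + y a₁) h))
  have hy : Function.Injective y := fun b₁ b₂ h =>
    congrArg Prod.snd (@hsum (b₁, b₁) (b₁, b₂) (congrArg (x b₁ + ·) h))
  have singleton_ne_Ico (a b : V) : ({x a} : Finset ℕ) ≠ Ico (y b) (y b + k) := fun h =>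
    hxy a b (mem_singleton.1 (h ▸ left_mem_Ico.2 (by omega))).symm
  intro a b hab
  by_cases ha : c a = 0 <;> by_cases hb : c b = 0 <;>
    simp only [bipartiteLabel_of_eq_zero, bipartiteLabel_of_ne_zero, ha, hb, ne_eq,
      not_false_eq_true] at hab
  · exact hx (singleton_injective hab)
  · exact absurd hab (singleton_ne_Ico a b)
  · exact absurd hab.symm (singleton_ne_Ico b a)
  · exact hy (Nat.Ico_add_right_injective hk hab)

theorem isWeaklyUniformIASI_bipartiteLabel {G : SimpleGraph V} (c : G.Coloring (Fin 2))
    (hk : 0 < k) (hxy : ∀ a b, x a ≠ y b)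
    (hsum : Function.Injective fun p : V × V => x p.1 + y p.2) :
    IsWeaklyUniformIASI G (bipartiteLabel c x y k) k := by
  have edgeSum_eq (a b : V) (ha : c a = 0) (hb : c b = 1) :
      edgeSum (bipartiteLabel c x y k) s(a, b) = Ico (x a + y b) (x a + y b + k) :=
    bipartiteLabel_add_bipartiteLabel ha hb
  refine ⟨⟨⟨bipartiteLabel_injective hk hxy hsum, bipartiteLabel_nonempty hk, ?_⟩, ?_⟩,
    card_bipartiteLabel⟩
  · intro e₁ he₁ e₂ he₂ heq
    obtain ⟨a₁, b₁, ha₁, hb₁, rfl⟩ := c.exists_eq_mk_of_mem_edgeSet he₁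
    obtain ⟨a₂, b₂, ha₂, hb₂, rfl⟩ := c.exists_eq_mk_of_mem_edgeSet he₂
    rw [edgeSum_eq a₁ b₁ ha₁ hb₁, edgeSum_eq a₂ b₂ ha₂ hb₂] at heq
    cases @hsum (a₁, b₁) (a₂, b₂) (Nat.Ico_add_right_injective hk heq)
    rfl
  · intro u v huv
    obtain ⟨a, b, ha, hb, he⟩ := c.exists_eq_mk_of_mem_edgeSet (G.mem_edgeSet.2 huv)
    change (edgeSum (bipartiteLabel c x y k) s(u, v)).card = k
    rw [he, edgeSum_eq a b ha hb, Nat.card_Ico]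
    omega

end bipartiteLabel

theorem bipartite_weakly_uniform_IASI {V : Type*} [Fintype V] (G : SimpleGraph V)
    (hG : G.Colorable 2) (k : ℕ) (hk : 0 < k) :
    ∃ f : V → Finset ℕ, IsWeaklyUniformIASI G f k := by
  obtain ⟨c⟩ := hG
  let n := Fintype.card V
  let ι : V → ℕ := fun v => Fintype.equivFin V v
  have hι : ∀ v, ι v < n := fun v => (Fintype.equivFin V v).isLt
  refine ⟨bipartiteLabel c ι (fun v => n * (ι v + 1)) k,
    isWeaklyUniformIASI_bipartiteLabel c hk (fun a b => ?_) (fun p q h => ?_)⟩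
  · exact ((hι a).trans_le (Nat.le_mul_of_pos_right n (ι b).succ_pos)).ne
  · obtain ⟨h₁, h₂⟩ := Nat.eq_and_eq_of_add_mul_eq (hι p.1) (hι q.1) h
    exact Prod.ext ((Fintype.equivFin V).injective (Fin.ext h₁))
      ((Fintype.equivFin V).injective (Fin.ext (Nat.add_right_cancel h₂)))
end

section
/- For any integer k > 1, a finite simple graph G admits a weakly k-uniform integer additive set-indexer if and only if G is bipartite. -/
/-!
A weakly uniform IASI is a proper 2-colouring in disguise: on an edge the two labels cannot
both be singletons (their sumset would have size `1 < k`) nor both `k`-sets (by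
Cauchy–Davenport their sumset would have size at least `2k - 1 > k`). Conversely, given a
2-colouring and an injection `a : V → ℕ`, label `v` by the interval starting at `2 ^ a v` of
length `1` or `k` according to its colour. Sumsets of intervals are intervals, so every edge
`uv` gets an interval of length `k` starting at `2 ^ a u + 2 ^ a v`, and by uniqueness of binary
expansions this start determines the edge.
-/

open Pointwise

open Finset

theorem Nat.Icc_add_Icc {a b c d : ℕ} (hab : a ≤ b) (hcd : c ≤ d) :
    Icc a b + Icc c d = Icc (a + c) (b + d) := by
  refine (Icc_add_Icc_subset a b c d).antisymm fun x hx => ?_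
  rw [mem_Icc] at hx
  rw [mem_add]
  exact ⟨min b (x - c), by rw [mem_Icc]; omega, x - min b (x - c), by rw [mem_Icc]; omega,
    by omega⟩

theorem Finset.left_eq_of_Icc_eq {α : Type*} [PartialOrder α] [LocallyFiniteOrder α]
    {a b c d : α} (hab : a ≤ b) (h : Icc a b = Icc c d) : a = c := by
  rw [← coe_inj, coe_Icc, coe_Icc, Set.Icc_eq_Icc_iff hab] at h
  exact h.1

theorem Sym2.toFinset_injective {α : Type*} [DecidableEq α] :
    Function.Injective (Sym2.toFinset : Sym2 α → Finset α) :=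
  fun _ _ h => Sym2.ext fun x => by rw [← Sym2.mem_toFinset, h, Sym2.mem_toFinset]

theorem Nat.sym2_eq_of_two_pow_add_two_pow_eq {i j i' j' : ℕ} (hij : i ≠ j) (hij' : i' ≠ j')
    (h : 2 ^ i + 2 ^ j = 2 ^ i' + 2 ^ j') : s(i, j) = s(i', j') := by
  apply Sym2.toFinset_injective
  apply Finset.geomSum_injective le_rfl
  simpa only [Sym2.toFinset_mk_eq, sum_pair hij, sum_pair hij'] using h

theorem edgeSum_mk {V : Type*} (f : V → Finset ℕ) (u v : V) :
    edgeSum f s(u, v) = f u + f v :=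
  rfl

namespace IsWeaklyUniformIASI

variable {V : Type*} {G : SimpleGraph V} {f : V → Finset ℕ} {k : ℕ}

theorem card_eq_one_iff_of_adj (hf : IsWeaklyUniformIASI G f k) (hk : 1 < k) {u v : V}
    (huv : G.Adj u v) : #(f u) = 1 ↔ #(f v) ≠ 1 := by
  have hsum : #(f u + f v) = k := hf.1.2 u v huv
  rcases hf.2 u with hu | hu <;> rcases hf.2 v with hv | hv
  · have hle : #(f u + f v) ≤ #(f u) * #(f v) := card_add_le
    rw [hu, hv] at hle
    omega
  · omega
  · omega
  · have hge := cauchy_davenport_add_of_linearOrder_isCancelAdd (hf.1.1.2.1 u) (hf.1.1.2.1 v)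
    omega

theorem colorable (hf : IsWeaklyUniformIASI G f k) (hk : 1 < k) : G.Colorable 2 :=
  SimpleGraph.Coloring.colorable (α := Bool) <| SimpleGraph.Coloring.mk
    (fun v => decide (#(f v) = 1)) fun huv => by
      simp only [ne_eq, decide_eq_decide, hf.card_eq_one_iff_of_adj hk huv]
      tauto

end IsWeaklyUniformIASI

section Construction

variable {V : Type*} {G : SimpleGraph V}

def binaryIntervalLabel (a len : V → ℕ) (v : V) : Finset ℕ :=
  Icc (2 ^ a v) (2 ^ a v + len v)

theorem binaryIntervalLabel_add (a len : V → ℕ) (u v : V) :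
    binaryIntervalLabel a len u + binaryIntervalLabel a len v =
      Icc (2 ^ a u + 2 ^ a v) (2 ^ a u + 2 ^ a v + (len u + len v)) := by
  rw [binaryIntervalLabel, binaryIntervalLabel, Nat.Icc_add_Icc (by omega) (by omega)]
  congr 1
  ring

theorem isIASI_binaryIntervalLabel {a : V → ℕ} (ha : Function.Injective a) (len : V → ℕ) :
    IsIASI G (binaryIntervalLabel a len) := by
  refine ⟨fun u v h => ?_, fun v => nonempty_Icc.2 (Nat.le_add_right _ _), ?_⟩
  · exact ha <| Nat.pow_right_injective le_rfl <| left_eq_of_Icc_eq (Nat.le_add_right _ _) h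
  · intro e₁ he₁ e₂ he₂ h
    induction e₁ using Sym2.ind with | _ u v =>
    induction e₂ using Sym2.ind with | _ u' v' =>
    rw [SimpleGraph.mem_edgeSet] at he₁ he₂
    rw [edgeSum_mk, edgeSum_mk, binaryIntervalLabel_add, binaryIntervalLabel_add] at h
    have hpair := Nat.sym2_eq_of_two_pow_add_two_pow_eq (ha.ne he₁.ne) (ha.ne he₂.ne)
      (left_eq_of_Icc_eq (Nat.le_add_right _ _) h)
    exact Sym2.map.injective ha hpair

theorem isWeaklyUniformIASI_binaryIntervalLabel (C : G.Coloring (Fin 2)) {a : V → ℕ}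
    (ha : Function.Injective a) {k : ℕ} (hk : 0 < k) :
    IsWeaklyUniformIASI G (binaryIntervalLabel a fun v => if C v = 0 then 0 else k - 1) k := by
  refine ⟨⟨isIASI_binaryIntervalLabel ha _, fun u v huv => ?_⟩, fun v => ?_⟩
  · have hC : C u ≠ C v := C.valid huv
    rw [binaryIntervalLabel_add, Nat.card_Icc]
    split_ifs <;> omega
  · rw [binaryIntervalLabel, Nat.card_Icc]
    split_ifs <;> omega

theorem exists_isWeaklyUniformIASI_of_colorable [Countable V] (hG : G.Colorable 2) {k : ℕ}
    (hk : 0 < k) : ∃ f, IsWeaklyUniformIASI G f k := by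
  obtain ⟨C⟩ := hG
  obtain ⟨a, ha⟩ := Countable.exists_injective_nat V
  exact ⟨_, isWeaklyUniformIASI_binaryIntervalLabel C ha hk⟩

end Construction

theorem weakly_uniform_IASI_iff_bipartite {V : Type*} [Fintype V] (G : SimpleGraph V)
    (k : ℕ) (hk : 1 < k) :
    (∃ f : V → Finset ℕ, IsWeaklyUniformIASI G f k) ↔ G.Colorable 2 :=
  ⟨fun ⟨_, hf⟩ => hf.colorable hk, fun hG => exists_isWeaklyUniformIASI_of_colorable hG (by omega)⟩
end

section
/- Every finite simple graph admits a k-uniform integer additive set-indexer for every positive odd integer k. -/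
open Pointwise

/-!
Label the vertex `v` by the interval `[c v, c v + t]`, where `k = 2t + 1` and `c v = 2 ^ e v` for an
injection `e : V → ℕ`. The sumset of the labels of `u` and `v` is the interval
`[c u + c v, c u + c v + 2t]`, which has `k` elements, and its left endpoint `c u + c v` determines
the unordered pair `{u, v}` when `u ≠ v` by uniqueness of binary expansions.
-/

open Finset Function

theorem Nat.Icc_add_Icc_s15 (a b m n : ℕ) :
    Icc a (a + m) + Icc b (b + n) = Icc (a + b) (a + b + (m + n)) := by
  ext x
  simp only [mem_add, mem_Icc]
  constructor
  · rintro ⟨y, ⟨hy₁, hy₂⟩, z, ⟨hz₁, hz₂⟩, rfl⟩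
    omega
  · rintro ⟨hx₁, hx₂⟩
    exact ⟨a + min (x - (a + b)) m, by omega, x - (a + min (x - (a + b)) m), by omega, by omega⟩

theorem Nat.pair_eq_pair_of_two_pow_add_two_pow_eq {a b c d : ℕ} (hab : a ≠ b) (hcd : c ≠ d)
    (h : 2 ^ a + 2 ^ b = 2 ^ c + 2 ^ d) : ({a, b} : Finset ℕ) = {c, d} :=
  equivBitIndices.symm.injective <| by
    simpa [sum_pair hab, sum_pair hcd] using h

theorem Sym2.eq_of_two_pow_add_two_pow_eq {α : Type*} {e : α → ℕ} (he : Injective e)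
    {u v u' v' : α} (huv : u ≠ v) (huv' : u' ≠ v')
    (h : 2 ^ e u + 2 ^ e v = 2 ^ e u' + 2 ^ e v') : s(u, v) = s(u', v') := by
  have := Nat.pair_eq_pair_of_two_pow_add_two_pow_eq (he.ne huv) (he.ne huv') h
  rw [← Sym2.toFinset_mk_eq, ← Sym2.toFinset_mk_eq] at this
  apply Sym2.map.injective he
  ext x
  simpa [Sym2.mem_toFinset] using congrArg (x ∈ ·) this

section IntervalLabel

variable {V : Type*}

def intervalLabel (c : V → ℕ) (t : ℕ) (v : V) : Finset ℕ :=
  Icc (c v) (c v + t)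

variable {c : V → ℕ}

theorem intervalLabel_add_intervalLabel (t : ℕ) (u v : V) :
    intervalLabel c t u + intervalLabel c t v = Icc (c u + c v) (c u + c v + 2 * t) := by
  rw [intervalLabel, intervalLabel, Nat.Icc_add_Icc_s15, two_mul]

theorem card_intervalLabel_add_intervalLabel (t : ℕ) (u v : V) :
    #(intervalLabel c t u + intervalLabel c t v) = 2 * t + 1 := by
  rw [intervalLabel_add_intervalLabel, Nat.card_Icc]
  omega

theorem add_eq_add_of_intervalLabel_add_eq {t : ℕ} {u v u' v' : V}
    (h : intervalLabel c t u + intervalLabel c t v = intervalLabel c t u' + intervalLabel c t v') :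
    c u + c v = c u' + c v' := by
  rw [intervalLabel_add_intervalLabel, intervalLabel_add_intervalLabel, ← coe_inj,
    coe_Icc, coe_Icc, Set.Icc_eq_Icc_iff (by omega)] at h
  exact h.1

theorem intervalLabel_injective (hc : Injective c) (t : ℕ) : Injective (intervalLabel c t) :=
  fun u v h => hc <| by
    have := add_eq_add_of_intervalLabel_add_eq (u := u) (v := u) (u' := v) (v' := v) (by rw [h])
    omega

theorem isUniformIASI_intervalLabel (G : SimpleGraph V) (hc : Injective c)
    (hsidon : ∀ ⦃u v u' v'⦄, u ≠ v → u' ≠ v' → c u + c v = c u' + c v' → s(u, v) = s(u', v'))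
    (t : ℕ) : IsUniformIASI G (intervalLabel c t) (2 * t + 1) := by
  refine ⟨⟨intervalLabel_injective hc t, fun v => nonempty_Icc.2 le_self_add, ?_⟩,
    fun u v _ => card_intervalLabel_add_intervalLabel t u v⟩
  rintro ⟨u, v⟩ huv ⟨u', v'⟩ huv' h
  exact hsidon (G.ne_of_adj huv) (G.ne_of_adj huv') (add_eq_add_of_intervalLabel_add_eq h)

end IntervalLabel

theorem uniform_IASI_of_odd_general {V : Type*} [Fintype V] (G : SimpleGraph V) (k : ℕ)
    (hk : Odd k) : ∃ f : V → Finset ℕ, IsUniformIASI G f k := by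
  obtain ⟨t, rfl⟩ := hk
  obtain ⟨e, he⟩ := Countable.exists_injective_nat V
  exact ⟨_, isUniformIASI_intervalLabel G ((Nat.pow_right_injective le_rfl).comp he)
    (fun _ _ _ _ => Sym2.eq_of_two_pow_add_two_pow_eq he) t⟩

theorem uniform_IASI_of_odd {V : Type*} [Fintype V] (G : SimpleGraph V) (k : ℕ)
    (hk : Odd k) (hk0 : 0 < k) : ∃ f : V → Finset ℕ, IsUniformIASI G f k :=
  uniform_IASI_of_odd_general G k hk
end
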